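/- Let Λ be a (non-zero) σ-finite, translation-invariant measure on the space of hyperplanes in ℝ^ℓ, and for a set W ⊆ ℝ^ℓ let [W] denote the set of hyperplanes meeting W. Then for every window W (compact convex polytope with nonempty interior) and every c > 0, Λ([cW]) = c·Λ([W]). -/

import Mathlib

open MeasureTheory Pointwise

/-- The space of (parametrized) affine hyperplanes in `ℝ^ℓ`: a unit normal
vector together with a signed distance. -/
def HypSpace (ℓ : ℕ) := Metric.sphere (0 : EuclideanSpace ℝ (Fin ℓ)) 1 × ℝ

instance (ℓ : ℕ) : MeasurableSpace (HypSpace ℓ) :=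
  inferInstanceAs (MeasurableSpace (Metric.sphere (0 : EuclideanSpace ℝ (Fin ℓ)) 1 × ℝ))

noncomputable instance (ℓ : ℕ) : TopologicalSpace (HypSpace ℓ) :=
  inferInstanceAs (TopologicalSpace (Metric.sphere (0 : EuclideanSpace ℝ (Fin ℓ)) 1 × ℝ))

/-- The hyperplane `{x : ⟪u, x⟫ = r}` associated to a parameter `(u, r)`. -/
noncomputable def hplane {ℓ : ℕ} (H : HypSpace ℓ) : Set (EuclideanSpace ℝ (Fin ℓ)) :=
  {x | inner (𝕜 := ℝ) (H.1 : EuclideanSpace ℝ (Fin ℓ)) x = H.2}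

/-- The translation by `x` acting on hyperplanes: `H ↦ H + x`. -/
noncomputable def hypTranslate {ℓ : ℕ} (x : EuclideanSpace ℝ (Fin ℓ)) (H : HypSpace ℓ) : HypSpace ℓ :=
  (H.1, H.2 + inner (𝕜 := ℝ) (H.1 : EuclideanSpace ℝ (Fin ℓ)) x)

/-- `[W]`: the set of hyperplanes meeting `W`. -/
def hitSet {ℓ : ℕ} (W : Set (EuclideanSpace ℝ (Fin ℓ))) : Set (HypSpace ℓ) :=
  {H | (hplane H ∩ W).Nonempty}

/-- The topological support of a measure on the hyperplane space. -/
def hypSupport {ℓ : ℕ} (Λ : Measure (HypSpace ℓ)) : Set (HypSpace ℓ) :=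
  {H | ∀ U : Set (HypSpace ℓ), IsOpen U → H ∈ U → 0 < Λ U}

/-!
On the hyperplanes whose unit normal `u` satisfies `⟪u, w⟫ > 0`, the coordinates
`(u, r / ⟪u, w⟫)` turn the translation by `t • w` into the shift `r ↦ r + t`. If every `[B(0, R)]`
has finite measure, the image of `Λ` in these coordinates is a shift-invariant measure finite on
bounded strips, so by uniqueness of Haar measure on `ℝ` it is a product `κ ⊗ volume`, which
scales by `|c|⁻¹` under `r ↦ c r`. Countably many such half-spheres cover the sphere, hence
`Λ.map (r ↦ r / c) = c • Λ`, and `[cW]` is the preimage of `[W]` under `r ↦ r / c`.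
If some `[B(0, R)]` has infinite measure, then so have `[W]` and `[cW]`: finitely many
translates of a set with nonempty interior cover `B(0, R)`.
-/

open Set
open scoped ENNReal InnerProductSpace

namespace MeasureTheory.Measure

variable {X : Type*} [MeasurableSpace X] {ν : Measure (X × ℝ)}

lemma isAddLeftInvariant_map_snd_restrict_prod_univ
    (hshift : ∀ t : ℝ, ν.map (fun p => (p.1, p.2 + t)) = ν) {C : Set X} (hC : MeasurableSet C) :
    IsAddLeftInvariant ((ν.restrict (C ×ˢ univ)).map Prod.snd) := by
  refine ⟨fun t => ext fun I hI => ?_⟩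
  have hshift_meas : Measurable fun p : X × ℝ => (p.1, p.2 + t) := by fun_prop
  rw [map_apply (measurable_const_add t) hI, map_apply measurable_snd hI,
    map_apply measurable_snd (measurable_const_add t hI), restrict_apply (measurable_snd hI),
    restrict_apply (measurable_snd (measurable_const_add t hI))]
  conv_rhs => rw [← hshift t]
  rw [map_apply hshift_meas (measurable_snd hI |>.inter (hC.prod MeasurableSet.univ))]
  congr 1
  ext p
  simp [add_comm]

lemma exists_prod_volume_eq_of_map_shift_eq
    (hshift : ∀ t : ℝ, ν.map (fun p => (p.1, p.2 + t)) = ν)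
    (hfin : ∀ R : ℝ, ν (univ ×ˢ Icc (-R) R) ≠ ∞) :
    ∃ κ : Measure X, IsFiniteMeasure κ ∧ κ.prod volume = ν := by
  set κ := (ν.restrict (univ ×ˢ Icc 0 1)).map Prod.fst
  have hκ : ∀ C, MeasurableSet C → κ C = ν (C ×ˢ Icc 0 1) := fun C hC => by
    rw [map_apply measurable_fst hC, restrict_apply (measurable_fst hC)]
    congr 1
    ext p
    simp
  have hκfin : IsFiniteMeasure κ := by
    refine ⟨?_⟩
    rw [hκ univ MeasurableSet.univ]
    exact (measure_mono (Set.prod_mono subset_rfl (Icc_subset_Icc (by norm_num) le_rfl))).trans_lt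
      (hfin 1).lt_top
  refine ⟨κ, hκfin, prod_eq fun C I hC hI => ?_⟩
  set m := (ν.restrict (C ×ˢ univ)).map Prod.snd
  have hm : ∀ I, MeasurableSet I → m I = ν (C ×ˢ I) := fun I hI => by
    rw [map_apply measurable_snd hI, restrict_apply (measurable_snd hI)]
    congr 1
    ext p
    simp [and_comm]
  have := isAddLeftInvariant_map_snd_restrict_prod_univ hshift hC
  have : IsFiniteMeasureOnCompacts m := by
    refine ⟨fun K hK => ?_⟩
    obtain ⟨R, hR⟩ := hK.isBounded.subset_closedBall 0
    rw [Real.closedBall_eq_Icc, zero_sub, zero_add] at hR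
    calc m K ≤ m (Icc (-R) R) := measure_mono hR
      _ = ν (C ×ˢ Icc (-R) R) := hm _ measurableSet_Icc
      _ ≤ ν (univ ×ˢ Icc (-R) R) := measure_mono (Set.prod_mono (subset_univ C) subset_rfl)
      _ < ∞ := (hfin R).lt_top
  obtain ⟨s, hs⟩ : ∃ s : NNReal, m = s • volume := ⟨_, isAddLeftInvariant_eq_smul m volume⟩
  rw [hκ C hC, ← hm I hI, ← hm _ measurableSet_Icc, hs]
  simp

lemma map_prodMap_mul_left_eq_smul_of_map_shift_eq
    (hshift : ∀ t : ℝ, ν.map (fun p => (p.1, p.2 + t)) = ν)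
    (hfin : ∀ R : ℝ, ν (univ ×ˢ Icc (-R) R) ≠ ∞) {c : ℝ} (hc : c ≠ 0) :
    ν.map (Prod.map id (c * ·)) = ENNReal.ofReal |c⁻¹| • ν := by
  obtain ⟨κ, _, rfl⟩ := exists_prod_volume_eq_of_map_shift_eq hshift hfin
  rw [← map_prod_map _ _ measurable_id (measurable_const_mul c), map_id,
    Real.map_volume_mul_left hc, prod_smul_right]

end MeasureTheory.Measure

namespace HypSpace

variable {ℓ : ℕ}

local notation "E" => EuclideanSpace ℝ (Fin ℓ)

instance : BorelSpace (HypSpace ℓ) :=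
  inferInstanceAs (BorelSpace (Metric.sphere (0 : E) 1 × ℝ))

def hypScale (c : ℝ) (H : HypSpace ℓ) : HypSpace ℓ := (H.1, c * H.2)

lemma measurable_hypTranslate (x : E) : Measurable (hypTranslate (ℓ := ℓ) x) := by
  unfold hypTranslate; fun_prop

lemma measurable_hypScale (c : ℝ) : Measurable (hypScale (ℓ := ℓ) c) := by
  unfold hypScale; fun_prop

lemma mem_hitSet {W : Set E} {H : HypSpace ℓ} :
    H ∈ hitSet W ↔ ∃ x ∈ W, ⟪(H.1 : E), x⟫_ℝ = H.2 := by
  simp [hitSet, hplane, Set.Nonempty, and_comm]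

lemma hitSet_mono {V W : Set E} (h : V ⊆ W) : hitSet (ℓ := ℓ) V ⊆ hitSet W :=
  fun _ ⟨x, hxH, hxV⟩ => ⟨x, hxH, h hxV⟩

lemma hitSet_biUnion {ι : Type*} (t : Finset ι) (W : ι → Set E) :
    hitSet (⋃ i ∈ t, W i) = ⋃ i ∈ t, hitSet (W i) := by
  ext H
  simp only [mem_hitSet, mem_iUnion]
  tauto

lemma isClosed_hitSet {W : Set E} (hW : IsCompact W) : IsClosed (hitSet (ℓ := ℓ) W) := by
  have : CompactSpace W := isCompact_iff_compactSpace.mp hW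
  have hinc : IsClosed {q : HypSpace ℓ × W | ⟪(q.1.1 : E), (q.2 : E)⟫_ℝ = q.1.2} :=
    isClosed_eq (by fun_prop) (by fun_prop)
  convert isClosedMap_fst_of_compactSpace _ hinc
  ext H
  simp [mem_hitSet]

lemma measurableSet_hitSet {W : Set E} (hW : IsCompact W) : MeasurableSet (hitSet (ℓ := ℓ) W) :=
  (isClosed_hitSet hW).measurableSet

lemma hitSet_vadd (x : E) (W : Set E) :
    hitSet (x +ᵥ W) = hypTranslate (-x) ⁻¹' hitSet (ℓ := ℓ) W := by
  ext H
  rw [mem_preimage, mem_hitSet, mem_hitSet]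
  simp only [mem_vadd_set, vadd_eq_add, hypTranslate, inner_neg_right,
    exists_exists_and_eq_and, inner_add_right]
  refine exists_congr fun y => and_congr_right fun _ => ?_
  constructor <;> intro h <;> linarith

lemma hitSet_smul {c : ℝ} (hc : c ≠ 0) (W : Set E) :
    hitSet (c • W) = hypScale c⁻¹ ⁻¹' hitSet (ℓ := ℓ) W := by
  ext H
  rw [mem_preimage, mem_hitSet, mem_hitSet]
  simp only [mem_smul_set, exists_exists_and_eq_and, hypScale, real_inner_smul_right]
  refine exists_congr fun y => and_congr_right fun _ => ?_
  rw [← eq_inv_mul_iff_mul_eq₀ hc]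

variable {Λ : Measure (HypSpace ℓ)}

lemma measure_hitSet_vadd (hinv : ∀ x : E, Λ.map (hypTranslate x) = Λ) {W : Set E}
    (hW : IsCompact W) (x : E) : Λ (hitSet (x +ᵥ W)) = Λ (hitSet W) := by
  rw [hitSet_vadd, ← Measure.map_apply (measurable_hypTranslate _) (measurableSet_hitSet hW), hinv]

lemma exists_measure_hitSet_le_mul (hinv : ∀ x : E, Λ.map (hypTranslate x) = Λ) {K W : Set E}
    (hK : IsCompact K) (hW : IsCompact W) (hWint : (interior W).Nonempty) :
    ∃ n : ℕ, Λ (hitSet K) ≤ n * Λ (hitSet W) := by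
  obtain ⟨p, hp⟩ := hWint
  obtain ⟨t, htK⟩ := hK.elim_finite_subcover (fun x : E => (x - p) +ᵥ interior W)
    (fun _ => isOpen_interior.vadd _) fun x _ => mem_iUnion.2 ⟨x, p, hp, sub_add_cancel x p⟩
  have hcover : K ⊆ ⋃ x ∈ t, (x - p) +ᵥ W :=
    htK.trans (biUnion_mono subset_rfl fun _ _ => vadd_set_mono interior_subset)
  refine ⟨t.card, ?_⟩
  calc Λ (hitSet K) ≤ Λ (⋃ x ∈ t, hitSet ((x - p) +ᵥ W)) := by
        rw [← hitSet_biUnion]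
        exact measure_mono (hitSet_mono hcover)
    _ ≤ ∑ x ∈ t, Λ (hitSet ((x - p) +ᵥ W)) := measure_biUnion_finset_le _ _
    _ = t.card * Λ (hitSet W) := by simp [measure_hitSet_vadd hinv hW]

lemma measure_hitSet_eq_top_of_closedBall (hinv : ∀ x : E, Λ.map (hypTranslate x) = Λ) {R : ℝ}
    (hR : Λ (hitSet (Metric.closedBall (0 : E) R)) = ∞) {W : Set E} (hW : IsCompact W)
    (hWint : (interior W).Nonempty) : Λ (hitSet W) = ∞ := by
  obtain ⟨n, hn⟩ := exists_measure_hitSet_le_mul hinv (isCompact_closedBall 0 R) hW hWint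
  rw [hR, top_le_iff, ENNReal.mul_eq_top] at hn
  exact (hn.resolve_right fun h => ENNReal.natCast_ne_top n h.1).2

def normalPos (w : E) : Set (HypSpace ℓ) := {H | 0 < ⟪(H.1 : E), w⟫_ℝ}

-- The division is junk where `⟪u, w⟫ = 0`; only the restriction to `normalPos w` is used.
noncomputable def shiftCoord (w : E) (H : HypSpace ℓ) : Metric.sphere (0 : E) 1 × ℝ :=
  (H.1, H.2 / ⟪(H.1 : E), w⟫_ℝ)

noncomputable def ofShiftCoord (w : E) (p : Metric.sphere (0 : E) 1 × ℝ) : HypSpace ℓ :=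
  (p.1, p.2 * ⟪(p.1 : E), w⟫_ℝ)

lemma measurable_shiftCoord (w : E) : Measurable (shiftCoord (ℓ := ℓ) w) := by
  unfold shiftCoord; fun_prop

lemma measurable_ofShiftCoord (w : E) : Measurable (ofShiftCoord (ℓ := ℓ) w) := by
  unfold ofShiftCoord; fun_prop

lemma measurableSet_normalPos (w : E) : MeasurableSet (normalPos (ℓ := ℓ) w) :=
  measurableSet_lt measurable_const (by fun_prop)

lemma shiftCoord_hypTranslate_smul {w : E} {H : HypSpace ℓ} (hH : H ∈ normalPos w) (t : ℝ) :
    shiftCoord w (hypTranslate (t • w) H) = ((shiftCoord w H).1, (shiftCoord w H).2 + t) := by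
  have ha : ⟪(H.1 : E), w⟫_ℝ ≠ 0 := ne_of_gt hH
  simp only [shiftCoord, hypTranslate, inner_smul_right, Prod.mk.injEq, true_and]
  field_simp

lemma ofShiftCoord_shiftCoord {w : E} {H : HypSpace ℓ} (hH : H ∈ normalPos w) :
    ofShiftCoord w (shiftCoord w H) = H := by
  have ha : ⟪(H.1 : E), w⟫_ℝ ≠ 0 := ne_of_gt hH
  simp only [ofShiftCoord, shiftCoord]
  rw [div_mul_cancel₀ _ ha]
  rfl

lemma hypScale_ofShiftCoord (c : ℝ) (w : E) (p : Metric.sphere (0 : E) 1 × ℝ) :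
    hypScale c (ofShiftCoord w p) = ofShiftCoord w (Prod.map id (c * ·) p) := by
  simp only [hypScale, ofShiftCoord, Prod.map_fst, Prod.map_snd, id, mul_assoc]
  rfl

lemma preimage_normalPos_hypTranslate (x w : E) :
    hypTranslate x ⁻¹' normalPos (ℓ := ℓ) w = normalPos w := rfl

lemma preimage_normalPos_hypScale (c : ℝ) (w : E) :
    hypScale c ⁻¹' normalPos (ℓ := ℓ) w = normalPos w := rfl

lemma restrict_normalPos_eq_map (w : E) :
    ((Λ.restrict (normalPos w)).map (shiftCoord w)).map (ofShiftCoord w) =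
      Λ.restrict (normalPos w) := by
  rw [Measure.map_map (measurable_ofShiftCoord w) (measurable_shiftCoord w)]
  conv_rhs => rw [← Measure.map_id (μ := Λ.restrict (normalPos w))]
  exact Measure.map_congr <|
    ae_restrict_of_forall_mem (measurableSet_normalPos w) fun H hH => ofShiftCoord_shiftCoord hH

lemma map_shift_map_shiftCoord (hinv : ∀ x : E, Λ.map (hypTranslate x) = Λ) (w : E) (t : ℝ) :
    ((Λ.restrict (normalPos w)).map (shiftCoord w)).map (fun p => (p.1, p.2 + t)) =
      (Λ.restrict (normalPos w)).map (shiftCoord w) := by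
  have hU := measurableSet_normalPos (ℓ := ℓ) w
  rw [Measure.map_map (by fun_prop) (measurable_shiftCoord w),
    Measure.map_congr (f := (fun p => (p.1, p.2 + t)) ∘ shiftCoord w)
      (g := shiftCoord w ∘ hypTranslate (t • w)) <|
      ae_restrict_of_forall_mem hU fun H hH => (shiftCoord_hypTranslate_smul hH t).symm,
    ← Measure.map_map (measurable_shiftCoord w) (measurable_hypTranslate _)]
  congr 1
  conv_lhs => rw [← preimage_normalPos_hypTranslate (t • w) w]
  rw [← Measure.restrict_map (measurable_hypTranslate _) hU, hinv]

lemma normalPos_inter_preimage_subset_hitSet (w : E) (R : ℝ) :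
    normalPos w ∩ shiftCoord w ⁻¹' (univ ×ˢ Icc (-R) R) ⊆
      hitSet (ℓ := ℓ) (Metric.closedBall 0 (R * ‖w‖)) := by
  rintro H ⟨hH, -, hR⟩
  have hu : ‖(H.1 : E)‖ = 1 := norm_eq_of_mem_sphere H.1
  have ha : ⟪(H.1 : E), w⟫_ℝ ≤ ‖w‖ := by
    simpa [hu] using real_inner_le_norm (H.1 : E) w
  have ha0 : 0 < ⟪(H.1 : E), w⟫_ℝ := hH
  have hr : |H.2| ≤ R * ⟪(H.1 : E), w⟫_ℝ := by
    have h := abs_le.2 hR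
    rwa [shiftCoord, abs_div, abs_of_pos ha0, div_le_iff₀ ha0] at h
  refine mem_hitSet.2 ⟨H.2 • (H.1 : E), ?_, ?_⟩
  · have hR0 : 0 ≤ R := nonneg_of_mul_nonneg_left ((abs_nonneg _).trans hr) ha0
    rw [mem_closedBall_zero_iff, norm_smul, hu, mul_one, Real.norm_eq_abs]
    exact hr.trans (mul_le_mul_of_nonneg_left ha hR0)
  · rw [real_inner_smul_right, real_inner_self_eq_norm_sq, hu]
    ring

lemma map_shiftCoord_univ_prod_Icc_ne_top
    (hfin : ∀ R : ℝ, Λ (hitSet (Metric.closedBall (0 : E) R)) ≠ ∞) (w : E) (R : ℝ) :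
    (Λ.restrict (normalPos w)).map (shiftCoord w) (univ ×ˢ Icc (-R) R) ≠ ∞ := by
  rw [Measure.map_apply (measurable_shiftCoord w) (MeasurableSet.univ.prod measurableSet_Icc),
    Measure.restrict_apply' (measurableSet_normalPos w), inter_comm]
  exact ne_top_of_le_ne_top (hfin _) (measure_mono (normalPos_inter_preimage_subset_hitSet w R))

lemma restrict_normalPos_map_hypScale (hinv : ∀ x : E, Λ.map (hypTranslate x) = Λ)
    (hfin : ∀ R : ℝ, Λ (hitSet (Metric.closedBall (0 : E) R)) ≠ ∞) (w : E) {c : ℝ} (hc : c ≠ 0) :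
    (Λ.map (hypScale c)).restrict (normalPos w) =
      ENNReal.ofReal |c⁻¹| • Λ.restrict (normalPos w) := by
  have hν := Measure.map_prodMap_mul_left_eq_smul_of_map_shift_eq (map_shift_map_shiftCoord hinv w)
    (map_shiftCoord_univ_prod_Icc_ne_top hfin w) hc
  rw [Measure.restrict_map (measurable_hypScale c) (measurableSet_normalPos w),
    preimage_normalPos_hypScale, ← restrict_normalPos_eq_map w,
    Measure.map_map (measurable_hypScale c) (measurable_ofShiftCoord w)]
  have hcomm : hypScale c ∘ ofShiftCoord w = ofShiftCoord (ℓ := ℓ) w ∘ Prod.map id (c * ·) :=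
    funext (hypScale_ofShiftCoord c w)
  rw [hcomm, ← Measure.map_map (measurable_ofShiftCoord w) (by fun_prop), hν,
    Measure.map_smul]

lemma iUnion_normalPos_denseSeq :
    ⋃ n, normalPos (ℓ := ℓ) (TopologicalSpace.denseSeq E n) = univ := by
  refine eq_univ_of_forall fun H => mem_iUnion.2 ?_
  obtain ⟨n, hn⟩ := (TopologicalSpace.denseRange_denseSeq E).exists_dist_lt (H.1 : E) one_pos
  refine ⟨n, ?_⟩
  have hu : ‖(H.1 : E)‖ = 1 := norm_eq_of_mem_sphere H.1
  have h := real_inner_le_norm (H.1 : E) ((H.1 : E) - TopologicalSpace.denseSeq E n)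
  rw [inner_sub_right, real_inner_self_eq_norm_sq, hu, ← dist_eq_norm] at h
  show 0 < ⟪(H.1 : E), TopologicalSpace.denseSeq E n⟫_ℝ
  nlinarith

theorem map_hypScale (hinv : ∀ x : E, Λ.map (hypTranslate x) = Λ)
    (hfin : ∀ R : ℝ, Λ (hitSet (Metric.closedBall (0 : E) R)) ≠ ∞) {c : ℝ} (hc : c ≠ 0) :
    Λ.map (hypScale c) = ENNReal.ofReal |c⁻¹| • Λ := by
  rw [← Measure.restrict_univ (μ := Λ.map _), ← Measure.restrict_univ (μ := _ • Λ),
    ← iUnion_normalPos_denseSeq, Measure.restrict_iUnion_congr]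
  intro n
  rw [Measure.restrict_smul]
  exact restrict_normalPos_map_hypScale hinv hfin _ hc

end HypSpace

open HypSpace

theorem hyperplane_measure_scaling_general {ℓ : ℕ} (Λ : Measure (HypSpace ℓ))
    (hinv : ∀ x : EuclideanSpace ℝ (Fin ℓ), Measure.map (hypTranslate x) Λ = Λ)
    (W : Set (EuclideanSpace ℝ (Fin ℓ))) (hWc : IsCompact W)
    (hWint : (interior W).Nonempty) (c : ℝ) (hc : 0 < c) :
    Λ (hitSet (c • W)) = ENNReal.ofReal c * Λ (hitSet W) := by
  by_cases htop : ∃ R : ℝ, Λ (hitSet (Metric.closedBall 0 R)) = ∞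
  · obtain ⟨R, hR⟩ := htop
    have hcWint : (interior (c • W)).Nonempty := by
      rw [interior_smul₀ hc.ne']
      exact hWint.smul_set
    rw [measure_hitSet_eq_top_of_closedBall hinv hR hWc hWint, measure_hitSet_eq_top_of_closedBall hinv hR (hWc.smul c) hcWint,
      ENNReal.mul_top (by simpa using hc)]
  · rw [hitSet_smul hc.ne', ← Measure.map_apply (measurable_hypScale _) (measurableSet_hitSet hWc),
      map_hypScale hinv (not_exists.mp htop) (inv_ne_zero hc.ne'), inv_inv, abs_of_pos hc,
      Measure.smul_apply, smul_eq_mul]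

/-- For a non-zero σ-finite translation-invariant measure `Λ` on the space of
hyperplanes of `ℝ^ℓ` (whose support is not contained in the hyperplanes parallel
to a fixed line), and every window `W` and `c > 0`: `Λ([cW]) = c · Λ([W])`. -/
theorem hyperplane_measure_scaling {ℓ : ℕ} (Λ : Measure (HypSpace ℓ))
    (hΛne : Λ ≠ 0) (hσ : SigmaFinite Λ)
    (hinv : ∀ x : EuclideanSpace ℝ (Fin ℓ), Measure.map (hypTranslate x) Λ = Λ)
    (hsupp : ¬ ∃ v : EuclideanSpace ℝ (Fin ℓ), v ≠ 0 ∧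
      ∀ H ∈ hypSupport Λ, inner (𝕜 := ℝ) (H.1 : EuclideanSpace ℝ (Fin ℓ)) v = 0)
    (W : Set (EuclideanSpace ℝ (Fin ℓ))) (hWc : IsCompact W) (hWconv : Convex ℝ W)
    (hWint : (interior W).Nonempty) (c : ℝ) (hc : 0 < c) :
    Λ (hitSet (c • W)) = ENNReal.ofReal c * Λ (hitSet W) :=
  hyperplane_measure_scaling_general Λ hinv W hWc hWint c hc
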